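/- arXiv:1401.5604 — 2 statements merged into one kernel-verified Lean document; each statement's English description precedes it below -/
import Mathlib

section
/- Let f: A → B and g: C → B be group homomorphisms with sections r: B → A and s: B → C (so f∘r = id_B = g∘s), and let α: A → D, γ: C → D be group homomorphisms with α∘r = γ∘s =: β. Let k: X → A be the kernel inclusion of f and l: Y → C the kernel inclusion of g. If the images of α∘k and γ∘l commute elementwise in D (i.e., α(k(x))·γ(l(y)) = γ(l(y))·α(k(x)) for all x ∈ X, y ∈ Y), then there exists a group homomorphism φ: A ×_B C → D (on the pullback {(a,c) | f(a)=g(c)}) such that φ(a, s(f(a))) = α(a) for all a ∈ A and φ(r(g(c)), c) = γ(c) for all c ∈ C. -/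
/-- The pullback `A ×_B C` of `f : A →* B` and `g : C →* B`,
as a subgroup of `A × C`. -/
def pullbackSubgroup {A B C : Type*} [Group A] [Group B] [Group C]
    (f : A →* B) (g : C →* B) : Subgroup (A × C) where
  carrier := {p | f p.1 = g p.2}
  one_mem' := by simp
  mul_mem' := by
    intro a b ha hb
    show f (a.1 * b.1) = g (a.2 * b.2)
    rw [map_mul, map_mul, ha, hb]
  inv_mem' := by
    intro a ha
    show f a.1⁻¹ = g a.2⁻¹
    rw [map_inv, map_inv, ha]

/-! Write `a = x * r (f a)` with `f x = 1` and put `φ (a, c) = α x * γ c`. Multiplicativity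
amounts to moving `γ c` past `α x'` for `f x' = 1`: split `c = y * s b` with `g y = 1`;
conjugating by `γ (s b) = α (r b)` keeps `α x'` in `α (ker f)`, and `γ y` commutes with
`α (ker f)` by hypothesis. -/

section
variable {A B C D : Type*} [Group A] [Group B] [Group C] [Group D]
  {f : A →* B} {g : C →* B} {r : B →* A} {s : B →* C} {α : A →* D} {γ : C →* D}

theorem conj_map_eq_map_conj_of_map_eq_one (hgs : ∀ b, g (s b) = b) (hβ : ∀ b, α (r b) = γ (s b))
    (hcomm : ∀ x y, f x = 1 → g y = 1 → Commute (α x) (γ y)) {x : A} (hx : f x = 1) (c : C) :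
    γ c * α x * (γ c)⁻¹ = α (r (g c) * x * (r (g c))⁻¹) := by
  set b := g c
  have hc : c = c * (s b)⁻¹ * s b := by group
  have hy : g (c * (s b)⁻¹) = 1 := by simp [b, hgs]
  have hxb : f (r b * x * (r b)⁻¹) = 1 := by simp [hx]
  calc γ c * α x * (γ c)⁻¹
      = γ (c * (s b)⁻¹) * α (r b * x * (r b)⁻¹) * (γ (c * (s b)⁻¹))⁻¹ := by
        conv_lhs => rw [hc]
        simp only [map_mul, map_inv, hβ]
        group
    _ = α (r b * x * (r b)⁻¹) := by
        rw [((hcomm _ _ hxb hy).symm).eq, mul_inv_cancel_right]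

variable (f g r s α γ) (hfr : ∀ b, f (r b) = b) (hgs : ∀ b, g (s b) = b)
  (hβ : ∀ b, α (r b) = γ (s b)) (hcomm : ∀ x y, f x = 1 → g y = 1 → Commute (α x) (γ y))

def pullbackLift : pullbackSubgroup f g →* D :=
  MonoidHom.mk' (fun p => α ((p : A × C).1 * (r (f (p : A × C).1))⁻¹) * γ (p : A × C).2) <| by
    rintro ⟨⟨a, c⟩, hp : f a = g c⟩ ⟨⟨a', c'⟩, -⟩
    have hx' : f (a' * (r (f a'))⁻¹) = 1 := by rw [map_mul, map_inv, hfr, mul_inv_cancel]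
    have hsplit : a * a' * (r (f (a * a')))⁻¹ =
        a * (r (f a))⁻¹ * (r (g c) * (a' * (r (f a'))⁻¹) * (r (g c))⁻¹) := by
      rw [map_mul, map_mul, ← hp]; group
    show α (a * a' * (r (f (a * a')))⁻¹) * γ (c * c') =
      α (a * (r (f a))⁻¹) * γ c * (α (a' * (r (f a'))⁻¹) * γ c')
    rw [hsplit, map_mul α, ← conj_map_eq_map_conj_of_map_eq_one hgs hβ hcomm hx' c, map_mul γ]
    group

theorem pullbackLift_apply (p : pullbackSubgroup f g) :
    pullbackLift f g r s α γ hfr hgs hβ hcomm p =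
      α ((p : A × C).1 * (r (f (p : A × C).1))⁻¹) * γ (p : A × C).2 :=
  rfl

theorem pullbackLift_apply_of_snd_eq {p : pullbackSubgroup f g}
    (hp : (p : A × C).2 = s (f (p : A × C).1)) :
    pullbackLift f g r s α γ hfr hgs hβ hcomm p = α (p : A × C).1 := by
  rw [pullbackLift_apply, hp, ← hβ, ← map_mul, inv_mul_cancel_right]

theorem pullbackLift_apply_of_fst_eq {p : pullbackSubgroup f g}
    (hp : (p : A × C).1 = r (g (p : A × C).2)) :
    pullbackLift f g r s α γ hfr hgs hβ hcomm p = γ (p : A × C).2 := by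
  have hmem : f (p : A × C).1 = g (p : A × C).2 := p.2
  rw [pullbackLift_apply, hmem, ← hp, mul_inv_cancel, map_one, one_mul]

end

theorem stmt0 {A B C D : Type*} [Group A] [Group B] [Group C] [Group D]
    (f : A →* B) (g : C →* B) (r : B →* A) (s : B →* C)
    (hfr : ∀ b, f (r b) = b) (hgs : ∀ b, g (s b) = b)
    (α : A →* D) (γ : C →* D) (hβ : ∀ b, α (r b) = γ (s b))
    (hcomm : ∀ x y, f x = 1 → g y = 1 → Commute (α x) (γ y)) :
    ∃ φ : pullbackSubgroup f g →* D,
      (∀ p : pullbackSubgroup f g, (p : A × C).2 = s (f (p : A × C).1) →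
        φ p = α (p : A × C).1) ∧
      (∀ p : pullbackSubgroup f g, (p : A × C).1 = r (g (p : A × C).2) →
        φ p = γ (p : A × C).2) :=
  ⟨pullbackLift f g r s α γ hfr hgs hβ hcomm,
    fun _ => pullbackLift_apply_of_snd_eq f g r s α γ hfr hgs hβ hcomm,
    fun _ => pullbackLift_apply_of_fst_eq f g r s α γ hfr hgs hβ hcomm⟩
end

section
/- In a meet-semilattice, consider the Heyting semilattices A = D = {0, 1/2, 1} (linear order), B = {0,1}, and C the four-element Boolean algebra {0, a, b, 1}, with maps f: A → B sending 0↦0, 1/2↦1, 1↦1; g: C → B sending 0↦0, a↦0, b↦1, 1↦1; r = s: B → A (resp. B → C) the evident order embeddings with r(0)=0, r(1)=1, s(0)=0, s(1)=1; α = id on A; γ: C → D sending 0↦0 and a,b,1 ↦ 1. Then there is no monotone (order-preserving) map φ: A ×_B C → D satisfying φ(a, s(f(a))) = α(a) and φ(r(g(c)), c) = γ(c), where A ×_B C = {(p,q) | f(p) = g(q)}. -/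
/-! The pullback point `(0, a)` lies over `r ∘ g` (as `r (g a) = 0`), so `φ` sends it to
`γ a = 1`; the point `(1/2, 1)` lies over `s ∘ f`, so `φ` sends it to `α (1/2) = 1/2`.
Since `(0, a) ≤ (1/2, 1)`, no monotone `φ` can do both. -/

namespace Stmt13

/-- `A = D` is the three-element chain `{0, 1/2, 1}`, modelled as `Fin 3`. -/
abbrev A := Fin 3
/-- `B` is the two-element chain, modelled as `Fin 2`. -/
abbrev B := Fin 2
/-- `C` is the four-element Boolean algebra, modelled as `Bool × Bool`,
with `0 = (false, false)`, `a = (true, false)`, `b = (false, true)`, `1 = (true, true)`. -/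
abbrev C := Bool × Bool

/-- `f : A → B`, `0 ↦ 0`, `1/2 ↦ 1`, `1 ↦ 1`. -/
def f : A → B := fun p => if p = 0 then 0 else 1
/-- `g : C → B`, `0 ↦ 0`, `a ↦ 0`, `b ↦ 1`, `1 ↦ 1`. -/
def g : C → B := fun q => if q.2 then 1 else 0
/-- The section `r : B → A`, `0 ↦ 0`, `1 ↦ 1`. -/
def r : B → A := fun b => if b = 0 then 0 else 2
/-- The section `s : B → C`, `0 ↦ 0`, `1 ↦ 1`. -/
def s : B → C := fun b => if b = 0 then (false, false) else (true, true)
/-- `α = id : A → D`. -/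
def α : A → A := id
/-- `γ : C → D`, `0 ↦ 0`, `a ↦ 1`, `b ↦ 1`, `1 ↦ 1`. -/
def γ : C → A := fun q => if q = (false, false) then 0 else 2

/-- The pullback `A ×_B C`, ordered componentwise. -/
abbrev P := {p : A × C // f p.1 = g p.2}

def zeroA : P := ⟨(0, (true, false)), rfl⟩

def halfOne : P := ⟨(1, (true, true)), rfl⟩

theorem zeroA_le_halfOne : zeroA ≤ halfOne := by decide

theorem stmt13 :
    ¬ ∃ φ : P → A, Monotone φ ∧
      (∀ p : P, (p : A × C).2 = s (f (p : A × C).1) → φ p = α (p : A × C).1) ∧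
      (∀ p : P, (p : A × C).1 = r (g (p : A × C).2) → φ p = γ (p : A × C).2) := by
  rintro ⟨φ, hφ, hα, hγ⟩
  have h := hφ zeroA_le_halfOne
  rw [hγ zeroA rfl, hα halfOne rfl] at h
  exact absurd h (by decide)

end Stmt13
end
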